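/- In the betweenness-reduction graph, for every set of added edges A* ⊆ {(t,S_i) : S_i ∈ S}, every node v ∉ {t, v_e} satisfies B(v) < B(t); hence the node of maximum betweenness is always t or v_e. -/

import Mathlib

/-- Number of shortest paths between `a` and `b` in `G`. -/
noncomputable def numSP {W : Type*} (G : SimpleGraph W) (a b : W) : ℕ :=
  {p : G.Walk a b | p.IsPath ∧ p.length = G.dist a b}.ncard

/-- Number of shortest paths between `a` and `b` in `G` passing through `v`. -/
noncomputable def numSPthrough {W : Type*} (G : SimpleGraph W) (v a b : W) : ℕ :=
  {p : G.Walk a b | p.IsPath ∧ p.length = G.dist a b ∧ v ∈ p.support}.ncard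

/-- Raw betweenness score `B(v)`: the sum over (unordered) pairs of nodes other than `v`
of the fraction of shortest paths between them that pass through `v`. -/
noncomputable def btw {W : Type*} [Fintype W] [DecidableEq W] (G : SimpleGraph W) (v : W) : ℚ :=
  (∑ a : W, ∑ b : W,
    if v ≠ a ∧ v ≠ b ∧ a ≠ b then
      (numSPthrough G v a b : ℚ) / (numSP G a b) else 0) / 2

/-- Vertex type of the betweenness-reduction graph from a 3-Set Cover instance with
universe size `l`, family size `m`, parameter `k`:
`v_e = Sum.inl (Sum.inl ())`, `t = Sum.inl (Sum.inr ())`,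
`w_1 = Sum.inr (Sum.inl (Sum.inl ()))`, `w_2 = Sum.inr (Sum.inl (Sum.inr ()))`,
set nodes `S_i`, universe nodes `u_j`, the clique `X` of size `α = m²l(m+l+2)` and the
clique `Y` of size `β = m²l(k+l+2)`. -/
abbrev BVert (l m k : ℕ) :=
  (Unit ⊕ Unit) ⊕ ((Unit ⊕ Unit) ⊕ ((Fin m ⊕ Fin l) ⊕
    (Fin (m ^ 2 * l * (m + l + 2)) ⊕ Fin (m ^ 2 * l * (k + l + 2)))))

/-- The betweenness-reduction graph with added edges `(t, S_i)` for `i ∈ A`.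
Edges: `(t,v_e)`, `(w_1,w_2)`, every `x_i` adjacent to `t`, every `y_i` adjacent to
`v_e`, every `S_i` adjacent to `v_e` and `w_1` and to its elements in `U`, every `u_j`
adjacent to `w_2`, and `X` and `Y` are cliques. -/
def Bgraph (l m k : ℕ) (S : Fin m → Finset (Fin l)) (A : Finset (Fin m)) :
    SimpleGraph (BVert l m k) :=
  SimpleGraph.fromRel (fun a b =>
    match a, b with
    | Sum.inl (Sum.inl _), Sum.inl (Sum.inr _) => True
    | Sum.inr (Sum.inl (Sum.inl _)), Sum.inr (Sum.inl (Sum.inr _)) => True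
    | Sum.inr (Sum.inr (Sum.inr (Sum.inl _))), Sum.inl (Sum.inr _) => True
    | Sum.inr (Sum.inr (Sum.inr (Sum.inr _))), Sum.inl (Sum.inl _) => True
    | Sum.inr (Sum.inr (Sum.inl (Sum.inl _))), Sum.inl (Sum.inl _) => True
    | Sum.inr (Sum.inr (Sum.inl (Sum.inl _))), Sum.inr (Sum.inl (Sum.inl _)) => True
    | Sum.inr (Sum.inr (Sum.inl (Sum.inl i))), Sum.inr (Sum.inr (Sum.inl (Sum.inr j))) =>
        j ∈ S i
    | Sum.inr (Sum.inr (Sum.inl (Sum.inr _))), Sum.inr (Sum.inl (Sum.inr _)) => True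
    | Sum.inr (Sum.inr (Sum.inr (Sum.inl _))), Sum.inr (Sum.inr (Sum.inr (Sum.inl _))) =>
        True
    | Sum.inr (Sum.inr (Sum.inr (Sum.inr _))), Sum.inr (Sum.inr (Sum.inr (Sum.inr _))) =>
        True
    | Sum.inl (Sum.inr _), Sum.inr (Sum.inr (Sum.inl (Sum.inl i))) => i ∈ A
    | _, _ => False)

/-!
The vertex `t` lies on every path between `X` and `Y`, so each of the `αβ` pairs in `X × Y`
contributes `1` to `B(t)`. Let `core = {t, v_e} ∪ X ∪ Y`. No other vertex `v` lies on a shortest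
path between two core vertices: if `v ∈ X ∪ Y`, its neighbourhood is a clique, so any path through
it can be shortcut; otherwise `v` is outside the core, which meets the rest of the graph only
through the adjacent vertices `t` and `v_e`, so a detour through `v` is longer than the route
through `t` and `v_e`. Each pair contributes at most `1`, so `B(v)` is at most half the number
`n² - |core|²` of ordered pairs not inside the core, and this is less than `αβ`.
-/

namespace SimpleGraph

variable {W : Type*} {G : SimpleGraph W} {a b h v : W}

lemma dist_add_dist_le_of_mem_support (p : G.Walk a b) (hp : p.length = G.dist a b)
    (hv : v ∈ p.support) : G.dist a v + G.dist v b ≤ G.dist a b := by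
  classical
  rw [← hp, ← p.take_spec hv, Walk.length_append]
  exact add_le_add (dist_le _) (dist_le _)

lemma dist_add_one_le_of_forall_mem_support (hG : G.Connected)
    (hh : ∀ p : G.Walk a v, h ∈ p.support) (hhv : h ≠ v) : G.dist a h + 1 ≤ G.dist a v := by
  obtain ⟨p, hp⟩ := hG.exists_walk_length_eq_dist a v
  have := dist_add_dist_le_of_mem_support p hp (hh p)
  have := hG.pos_dist_of_ne hhv
  omega

lemma dist_lt_dist_add_dist_of_isClique_neighborSet (hG : G.Connected)
    (hv : G.IsClique (G.neighborSet v)) (hav : a ≠ v) (hvb : v ≠ b) :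
    G.dist a b < G.dist a v + G.dist v b := by
  obtain ⟨p, hp⟩ := hG.exists_walk_length_eq_dist v a
  obtain ⟨q, hq⟩ := hG.exists_walk_length_eq_dist v b
  cases p with
  | nil => exact absurd rfl hav
  | @cons _ c _ hc p =>
  cases q with
  | nil => exact absurd rfl hvb
  | @cons _ d _ hd q =>
  -- `c`, `d` are the first steps from `v` towards `a`, `b`; being equal or adjacent, they let
  -- `a ⋯ c - d ⋯ b` bypass `v` with one step less.
  have hcd : G.dist c d ≤ 1 := by
    by_cases hcd : c = d
    · simp [hcd]
    · exact (dist_eq_one_iff_adj.mpr (hv hc hd hcd)).le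
  have hac : G.dist a c ≤ p.length := dist_comm (G := G) ▸ dist_le p
  have hdb : G.dist d b ≤ q.length := dist_le q
  rw [show G.dist a v = G.dist v a from dist_comm, ← hp, ← hq]
  simp only [Walk.length_cons]
  have := hG.dist_triangle (u := a) (v := c) (w := b)
  have := hG.dist_triangle (u := c) (v := d) (w := b)
  omega

lemma Walk.mem_support_of_neighborSet_subset {K : Set W} (p : G.Walk a b)
    (hK : ∀ u ∈ K, G.neighborSet u ⊆ insert h K) (ha : a ∈ K) (hb : b ∉ K) :
    h ∈ p.support := by
  obtain ⟨d, hd, hd₁, hd₂⟩ := p.exists_boundary_dart K ha hb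
  obtain hdh | hdK := hK _ hd₁ d.adj
  · exact hdh ▸ p.dart_snd_mem_support_of_mem_darts hd
  · exact absurd hdK hd₂

end SimpleGraph

open SimpleGraph

section ShortestPaths

variable {W : Type*} {G : SimpleGraph W} {a b v : W}

lemma numSPthrough_eq_zero_of_dist_lt (h : G.dist a b < G.dist a v + G.dist v b) :
    numSPthrough G v a b = 0 := by
  rw [numSPthrough]
  convert Set.ncard_empty (G.Walk a b)
  refine Set.eq_empty_of_forall_notMem fun p hp => ?_
  obtain ⟨_, hp, hv⟩ := hp
  exact (dist_add_dist_le_of_mem_support p hp hv).not_gt h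

lemma numSPthrough_div_numSP_le_one : (numSPthrough G v a b : ℚ) / numSP G a b ≤ 1 := by
  rcases eq_or_ne (numSP G a b) 0 with h | h
  · simp [h]
  refine div_le_one_of_le₀ ?_ (Nat.cast_nonneg _)
  rw [numSP] at h
  rw [numSPthrough, numSP]
  exact_mod_cast Set.ncard_le_ncard (fun _ => And.imp_right And.left)
    (Set.finite_of_ncard_ne_zero h)

lemma numSPthrough_div_numSP_eq_one [Finite W] (hr : G.Reachable a b)
    (hv : ∀ p : G.Walk a b, v ∈ p.support) : (numSPthrough G v a b : ℚ) / numSP G a b = 1 := by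
  classical
  have : Fintype W := Fintype.ofFinite W
  have hthrough : numSPthrough G v a b = numSP G a b := by
    simp only [numSPthrough, numSP, hv, and_true]
  have hpos : numSP G a b ≠ 0 := by
    obtain ⟨p, hp⟩ := hr.exists_path_of_dist
    refine (Set.ncard_pos ?_).mpr ⟨p, hp⟩ |>.ne'
    exact (Set.toFinite {p : G.Walk a b | p.length = G.dist a b}).subset fun _ hp => hp.2
  rw [hthrough, div_self (by exact_mod_cast hpos)]

end ShortestPaths

section Betweenness

open Finset

variable {W : Type*} [DecidableEq W] {G : SimpleGraph W} {v a b : W}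

/-- Brandes' pair-dependency `σ_ab(v) / σ_ab`. -/
noncomputable def pairDependency (G : SimpleGraph W) (v a b : W) : ℚ :=
  if v ≠ a ∧ v ≠ b ∧ a ≠ b then (numSPthrough G v a b : ℚ) / numSP G a b else 0

lemma btw_eq_sum_pairDependency [Fintype W] :
    btw G v = (∑ a, ∑ b, pairDependency G v a b) / 2 := rfl

lemma pairDependency_nonneg : 0 ≤ pairDependency G v a b := by
  unfold pairDependency
  split_ifs <;> positivity

lemma pairDependency_le_one : pairDependency G v a b ≤ 1 := by
  unfold pairDependency
  split_ifs
  exacts [numSPthrough_div_numSP_le_one, zero_le_one]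

lemma pairDependency_eq_zero (h : numSPthrough G v a b = 0) : pairDependency G v a b = 0 := by
  simp [pairDependency, h]

lemma pairDependency_eq_one [Finite W] (hG : G.Connected) (hva : v ≠ a) (hvb : v ≠ b)
    (hab : a ≠ b) (hv : ∀ p : G.Walk a b, v ∈ p.support) : pairDependency G v a b = 1 := by
  rw [pairDependency, if_pos ⟨hva, hvb, hab⟩, numSPthrough_div_numSP_eq_one (hG a b) hv]

variable [Fintype W]

lemma btw_le_of_numSPthrough_eq_zero (C : Finset W)
    (hC : ∀ a ∈ C, ∀ b ∈ C, v ≠ a → v ≠ b → numSPthrough G v a b = 0) :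
    btw G v ≤ ((Fintype.card W : ℚ) ^ 2 - (#C : ℚ) ^ 2) / 2 := by
  have hCC : ∀ p ∈ C ×ˢ C, pairDependency G v p.1 p.2 = 0 := by
    intro ⟨a, b⟩ hp
    rw [mem_product] at hp
    by_cases hva : v = a
    · simp [pairDependency, hva]
    by_cases hvb : v = b
    · simp [pairDependency, hvb]
    exact pairDependency_eq_zero (hC a hp.1 b hp.2 hva hvb)
  rw [btw_eq_sum_pairDependency]
  gcongr
  calc ∑ a, ∑ b, pairDependency G v a b
      = ∑ p ∈ (C ×ˢ C)ᶜ, pairDependency G v p.1 p.2 := by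
        rw [← Fintype.sum_prod_type', ← sum_compl_add_sum (C ×ˢ C), sum_eq_zero hCC, add_zero]
    _ ≤ #(C ×ˢ C)ᶜ • (1 : ℚ) := sum_le_card_nsmul _ _ _ fun _ _ => pairDependency_le_one
    _ = (Fintype.card W : ℚ) ^ 2 - (#C : ℚ) ^ 2 := by
        rw [card_compl, card_product, Fintype.card_prod, nsmul_one,
          Nat.cast_sub (Nat.mul_le_mul (card_le_univ C) (card_le_univ C))]
        push_cast
        ring

lemma card_mul_card_le_btw (hG : G.Connected) (s u : Finset W) (hsu : Disjoint s u)
    (hvs : v ∉ s) (hvu : v ∉ u) (hv : ∀ a ∈ s, ∀ b ∈ u, ∀ p : G.Walk a b, v ∈ p.support) :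
    (#s * #u : ℚ) ≤ btw G v := by
  have hone : ∀ p ∈ s ×ˢ u ∪ u ×ˢ s, pairDependency G v p.1 p.2 = 1 := by
    rintro ⟨a, b⟩ hp
    simp only [mem_union, mem_product] at hp ⊢
    rcases hp with ⟨has, hbu⟩ | ⟨hau, hbs⟩
    · exact pairDependency_eq_one hG (by rintro rfl; exact hvs has) (by rintro rfl; exact hvu hbu)
        (by rintro rfl; exact Finset.disjoint_left.mp hsu has hbu) (hv a has b hbu)
    · refine pairDependency_eq_one hG (by rintro rfl; exact hvu hau) (by rintro rfl; exact hvs hbs)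
        (by rintro rfl; exact Finset.disjoint_left.mp hsu hbs hau) fun p => ?_
      simpa using hv b hbs a hau p.reverse
  have hdisj : Disjoint (s ×ˢ u) (u ×ˢ s) := disjoint_product.mpr (Or.inl hsu)
  rw [btw_eq_sum_pairDependency]
  calc (#s * #u : ℚ)
      = (∑ p ∈ s ×ˢ u ∪ u ×ˢ s, pairDependency G v p.1 p.2) / 2 := by
        rw [sum_congr rfl hone, sum_const, card_union_of_disjoint hdisj, card_product,
          card_product, nsmul_one]
        push_cast
        ring
    _ ≤ (∑ p : W × W, pairDependency G v p.1 p.2) / 2 := by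
        gcongr ?_ / _
        exact sum_le_univ_sum_of_nonneg fun _ => pairDependency_nonneg
    _ = (∑ a, ∑ b, pairDependency G v a b) / 2 := by rw [Fintype.sum_prod_type']

end Betweenness

lemma sq_sub_sq_div_two_lt {M P K : ℚ} (hM : 4 ≤ M) (hK : 4 ≤ K) (hP : 0 < P) (hPM : P ≤ 2 * M) :
    ((M * P + M * K + P + 2) ^ 2 - (M * P + M * K + 2) ^ 2) / 2 < M * P * (M * K) := by
  have hMK : 0 ≤ (M - 4) * (K - 4) := mul_nonneg (by linarith) (by linarith)
  have key : M * P + M * K + 2 + P / 2 < M * (M * K) := by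
    nlinarith [mul_nonneg hMK (by linarith : (0 : ℚ) ≤ M)]
  calc ((M * P + M * K + P + 2) ^ 2 - (M * P + M * K + 2) ^ 2) / 2
      = P * (M * P + M * K + 2 + P / 2) := by ring
    _ < P * (M * (M * K)) := by gcongr
    _ = M * P * (M * K) := by ring

namespace Bgraph

open Finset

variable {l m k : ℕ} {S : Fin m → Finset (Fin l)} {A : Finset (Fin m)} {a b v w : BVert l m k}

def ve : BVert l m k := Sum.inl (Sum.inl ())

def t : BVert l m k := Sum.inl (Sum.inr ())

def X : Finset (BVert l m k) :=
  univ.map ⟨fun i => Sum.inr (Sum.inr (Sum.inr (Sum.inl i))), fun _ _ => by simp⟩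

def Y : Finset (BVert l m k) :=
  univ.map ⟨fun i => Sum.inr (Sum.inr (Sum.inr (Sum.inr i))), fun _ _ => by simp⟩

def core : Finset (BVert l m k) := {t, ve} ∪ X ∪ Y

lemma mem_X : v ∈ X ↔ ∃ i, Sum.inr (Sum.inr (Sum.inr (Sum.inl i))) = v := by
  simp only [X, mem_map, mem_univ, true_and]
  rfl

lemma mem_Y : v ∈ Y ↔ ∃ i, Sum.inr (Sum.inr (Sum.inr (Sum.inr i))) = v := by
  simp only [Y, mem_map, mem_univ, true_and]
  rfl

lemma adj_t_ve : (Bgraph l m k S A).Adj t ve := by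
  simp [Bgraph, t, ve]

lemma eq_t_or_mem_X_of_adj (hv : v ∈ X) (hvw : (Bgraph l m k S A).Adj v w) : w = t ∨ w ∈ X := by
  obtain ⟨i, rfl⟩ := mem_X.mp hv
  rcases w with ((_ | _) | (_ | _) | (_ | _) | _ | _) <;> simp_all [Bgraph, t, mem_X]

lemma eq_ve_or_mem_Y_of_adj (hv : v ∈ Y) (hvw : (Bgraph l m k S A).Adj v w) :
    w = ve ∨ w ∈ Y := by
  obtain ⟨i, rfl⟩ := mem_Y.mp hv
  rcases w with ((_ | _) | (_ | _) | (_ | _) | _ | _) <;> simp_all [Bgraph, ve, mem_Y]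

lemma isClique_neighborSet_of_mem_X (hv : v ∈ X) :
    (Bgraph l m k S A).IsClique ((Bgraph l m k S A).neighborSet v) := by
  intro a ha b hb hab
  have ha := eq_t_or_mem_X_of_adj hv ha
  have hb := eq_t_or_mem_X_of_adj hv hb
  rw [mem_X] at ha hb
  rcases ha with rfl | ⟨i, rfl⟩ <;> rcases hb with rfl | ⟨j, rfl⟩ <;> simp_all [Bgraph, t]

lemma isClique_neighborSet_of_mem_Y (hv : v ∈ Y) :
    (Bgraph l m k S A).IsClique ((Bgraph l m k S A).neighborSet v) := by
  intro a ha b hb hab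
  have ha := eq_ve_or_mem_Y_of_adj hv ha
  have hb := eq_ve_or_mem_Y_of_adj hv hb
  rw [mem_Y] at ha hb
  rcases ha with rfl | ⟨i, rfl⟩ <;> rcases hb with rfl | ⟨j, rfl⟩ <;> simp_all [Bgraph, ve]

lemma connected (hm : 0 < m) : (Bgraph l m k S A).Connected := by
  let G := Bgraph l m k S A
  refine (connected_iff_exists_forall_reachable G).mpr ⟨ve, ?_⟩
  have hS : G.Reachable ve (Sum.inr (Sum.inr (Sum.inl (Sum.inl ⟨0, hm⟩)))) :=
    Adj.reachable (by simp [G, Bgraph, ve])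
  have hw₁ : G.Reachable ve (Sum.inr (Sum.inl (Sum.inl ()))) :=
    hS.trans (Adj.reachable (by simp [G, Bgraph]))
  have hw₂ : G.Reachable ve (Sum.inr (Sum.inl (Sum.inr ()))) :=
    hw₁.trans (Adj.reachable (by simp [G, Bgraph]))
  have ht : G.Reachable ve t := adj_t_ve.symm.reachable
  rintro ((⟨⟩ | ⟨⟩) | (⟨⟩ | ⟨⟩) | (_ | _) | _ | _)
  · rfl
  · exact ht
  · exact hw₁
  · exact hw₂
  · exact Adj.reachable (by simp [G, Bgraph, ve])
  · exact hw₂.trans (Adj.reachable (by simp [G, Bgraph]))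
  · exact ht.trans (Adj.reachable (by simp [G, Bgraph, t]))
  · exact Adj.reachable (by simp [G, Bgraph, ve])

lemma card_X : #(X : Finset (BVert l m k)) = m ^ 2 * l * (m + l + 2) := by
  simp [X]

lemma card_Y : #(Y : Finset (BVert l m k)) = m ^ 2 * l * (k + l + 2) := by
  simp [Y]

lemma disjoint_X_Y : Disjoint (X : Finset (BVert l m k)) Y := by
  simp [Finset.disjoint_left, mem_X, mem_Y]

lemma t_notMem_X : (t : BVert l m k) ∉ X := by
  simp [mem_X, t]

lemma t_notMem_Y : (t : BVert l m k) ∉ Y := by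
  simp [mem_Y, t]

lemma card_core :
    #(core : Finset (BVert l m k)) = m ^ 2 * l * (m + l + 2) + m ^ 2 * l * (k + l + 2) + 2 := by
  rw [core, card_union_of_disjoint, card_union_of_disjoint, card_X, card_Y, card_pair]
  · ring
  · simp [t, ve]
  · simp [Finset.disjoint_left, mem_X, t, ve]
  · simp [Finset.disjoint_left, mem_X, mem_Y, t, ve]

lemma card_BVert : Fintype.card (BVert l m k)
    = m ^ 2 * l * (m + l + 2) + m ^ 2 * l * (k + l + 2) + m + l + 4 := by
  simp only [Fintype.card_sum, Fintype.card_unit, Fintype.card_fin]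
  ring

lemma mem_core : v ∈ core ↔ v = t ∨ v = ve ∨ v ∈ X ∨ v ∈ Y := by
  simp only [core, mem_union, mem_insert, mem_singleton, or_assoc]

/-- Every vertex of the core reaches the rest of the graph through its hub `t` or `ve`. -/
lemma exists_hub (hG : (Bgraph l m k S A).Connected) (ha : a ∈ core) :
    ∃ h, (h = t ∨ h = ve) ∧
      ∀ v ∉ core, (Bgraph l m k S A).dist a h + 1 ≤ (Bgraph l m k S A).dist a v := by
  have hne {h v : BVert l m k} (hh : h = t ∨ h = ve) (hv : v ∉ core) : h ≠ v := by
    rintro rfl; exact hv (mem_core.mpr (by tauto))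
  rcases mem_core.mp ha with rfl | rfl | ha | ha
  · exact ⟨t, .inl rfl, fun v hv =>
      dist_add_one_le_of_forall_mem_support hG (·.start_mem_support) (hne (.inl rfl) hv)⟩
  · exact ⟨ve, .inr rfl, fun v hv =>
      dist_add_one_le_of_forall_mem_support hG (·.start_mem_support) (hne (.inr rfl) hv)⟩
  · refine ⟨t, .inl rfl, fun v hv => dist_add_one_le_of_forall_mem_support hG (fun p => ?_)
      (hne (.inl rfl) hv)⟩
    exact p.mem_support_of_neighborSet_subset (K := (X : Finset (BVert l m k)))
      (fun _ hu _ hw => eq_t_or_mem_X_of_adj hu hw)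
      ha fun hvX => hv (mem_core.mpr (by tauto))
  · refine ⟨ve, .inr rfl, fun v hv => dist_add_one_le_of_forall_mem_support hG (fun p => ?_)
      (hne (.inr rfl) hv)⟩
    exact p.mem_support_of_neighborSet_subset (K := (Y : Finset (BVert l m k)))
      (fun _ hu _ hw => eq_ve_or_mem_Y_of_adj hu hw)
      ha fun hvY => hv (mem_core.mpr (by tauto))

lemma dist_le_one_of_hub {h h' : BVert l m k} (hh : h = t ∨ h = ve) (hh' : h' = t ∨ h' = ve) :
    (Bgraph l m k S A).dist h h' ≤ 1 := by
  have := dist_eq_one_iff_adj.mpr (adj_t_ve (k := k) (S := S) (A := A))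
  rcases hh with rfl | rfl <;> rcases hh' with rfl | rfl <;> simp [this, dist_comm]

lemma dist_lt_of_notMem_core (hG : (Bgraph l m k S A).Connected) (ha : a ∈ core) (hb : b ∈ core)
    (hv : v ∉ core) :
    (Bgraph l m k S A).dist a b < (Bgraph l m k S A).dist a v + (Bgraph l m k S A).dist v b := by
  obtain ⟨h, hh, hah⟩ := exists_hub hG ha
  obtain ⟨h', hh', hbh'⟩ := exists_hub hG hb
  have := hah v hv
  have := hbh' v hv
  have := dist_le_one_of_hub (S := S) (A := A) hh hh'
  have := hG.dist_triangle (u := a) (v := h) (w := b)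
  have := hG.dist_triangle (u := h) (v := h') (w := b)
  rw [dist_comm (u := v)]
  rw [dist_comm (u := h')] at this
  omega

lemma numSPthrough_eq_zero_of_mem_core (hG : (Bgraph l m k S A).Connected) (hvt : v ≠ t)
    (hvve : v ≠ ve) (ha : a ∈ core) (hb : b ∈ core) (hva : v ≠ a) (hvb : v ≠ b) :
    numSPthrough (Bgraph l m k S A) v a b = 0 := by
  refine numSPthrough_eq_zero_of_dist_lt ?_
  by_cases hv : v ∈ core
  · rcases mem_core.mp hv with hv | hv | hv | hv
    · exact absurd hv hvt
    · exact absurd hv hvve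
    · exact dist_lt_dist_add_dist_of_isClique_neighborSet hG (isClique_neighborSet_of_mem_X hv)
        hva.symm hvb
    · exact dist_lt_dist_add_dist_of_isClique_neighborSet hG (isClique_neighborSet_of_mem_Y hv)
        hva.symm hvb
  · exact dist_lt_of_notMem_core hG ha hb hv

lemma btw_le_of_ne_t_of_ne_ve (hm : 0 < m) (hvt : v ≠ t) (hvve : v ≠ ve) :
    btw (Bgraph l m k S A) v
      ≤ ((Fintype.card (BVert l m k) : ℚ) ^ 2 - (#(core : Finset (BVert l m k)) : ℚ) ^ 2) / 2 :=
  btw_le_of_numSPthrough_eq_zero core fun _ ha _ hb =>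
    numSPthrough_eq_zero_of_mem_core (connected hm) hvt hvve ha hb

lemma card_X_mul_card_Y_le_btw_t (hm : 0 < m) :
    (#(X : Finset (BVert l m k)) * #(Y : Finset (BVert l m k)) : ℚ) ≤ btw (Bgraph l m k S A) t :=
  card_mul_card_le_btw (connected hm) X Y disjoint_X_Y t_notMem_X t_notMem_Y fun _ ha _ hb p =>
    p.mem_support_of_neighborSet_subset (K := (X : Finset (BVert l m k)))
      (fun _ hu _ hw => eq_t_or_mem_X_of_adj hu hw) ha (disjoint_right.mp disjoint_X_Y hb)

lemma card_sq_sub_card_core_sq_lt (hl : 1 ≤ l) (hk : 1 ≤ k) (hkm : k < m) :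
    ((Fintype.card (BVert l m k) : ℚ) ^ 2 - (#(core : Finset (BVert l m k)) : ℚ) ^ 2) / 2
      < #(X : Finset (BVert l m k)) * #(Y : Finset (BVert l m k)) := by
  have hm : 4 ≤ m ^ 2 := by nlinarith
  have hM : m ^ 2 ≤ m ^ 2 * l := Nat.le_mul_of_pos_right _ hl
  have hPM : m + l + 2 ≤ 2 * (m ^ 2 * l) := by
    nlinarith [Nat.mul_le_mul_right l hm]
  have key := sq_sub_sq_div_two_lt (M := (m ^ 2 * l : ℕ)) (P := (m + l + 2 : ℕ))
    (K := (k + l + 2 : ℕ)) (by norm_cast; omega) (by norm_cast; omega) (by positivity)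
    (by exact_mod_cast hPM)
  rw [card_BVert, card_core, card_X, card_Y]
  push_cast at key ⊢
  convert key using 3
  ring

end Bgraph

theorem max_btw_t_or_evader_general (l m k : ℕ) (hl : 1 ≤ l) (hk : 1 ≤ k) (hkm : k < m)
    (S : Fin m → Finset (Fin l)) (A : Finset (Fin m)) :
    let G := Bgraph l m k S A
    let ve : BVert l m k := Sum.inl (Sum.inl ())
    let t : BVert l m k := Sum.inl (Sum.inr ())
    (∀ v : BVert l m k, v ≠ t → v ≠ ve → btw G v < btw G t) ∧
      (∀ v : BVert l m k, (∀ w : BVert l m k, btw G w ≤ btw G v) →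
        v = t ∨ v = ve) := by
  intro G ve t
  have hlt (v : BVert l m k) (hvt : v ≠ t) (hvve : v ≠ ve) : btw G v < btw G t :=
    calc btw G v ≤ _ := Bgraph.btw_le_of_ne_t_of_ne_ve (by omega) hvt hvve
      _ < _ := Bgraph.card_sq_sub_card_core_sq_lt hl hk hkm
      _ ≤ btw G t := Bgraph.card_X_mul_card_Y_le_btw_t (by omega)
  refine ⟨hlt, fun v hmax => ?_⟩
  by_contra! hv
  exact (hmax t).not_gt (hlt v hv.1 hv.2)

/-- For every set of added edges `A* ⊆ {(t, S_i) : S_i ∈ S}`, every node `v ∉ {t, v_e}`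
of the betweenness-reduction graph satisfies `B(v) < B(t)`; hence the node of maximum
betweenness is always `t` or `v_e`. -/
theorem max_btw_t_or_evader (l m k : ℕ) (hl : 1 ≤ l) (hk : 1 ≤ k) (hkm : k < m)
    (S : Fin m → Finset (Fin l)) (h3 : ∀ i, (S i).card = 3) (A : Finset (Fin m)) :
    let G := Bgraph l m k S A
    let ve : BVert l m k := Sum.inl (Sum.inl ())
    let t : BVert l m k := Sum.inl (Sum.inr ())
    (∀ v : BVert l m k, v ≠ t → v ≠ ve → btw G v < btw G t) ∧
      (∀ v : BVert l m k, (∀ w : BVert l m k, btw G w ≤ btw G v) →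
        v = t ∨ v = ve) :=
  max_btw_t_or_evader_general l m k hl hk hkm S A
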